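/- Let n ≥ 3 be odd, T > 0, and let φ : ℝⁿ → ℝ be continuously differentiable with K = {x ∈ ℝⁿ : φ(x) ≤ 0} compact, frontier K = {x : φ(x) = 0}, ∇φ(y) ≠ 0 for every y with φ(y) = 0, 0 in the interior of K, and K strongly star-shaped with respect to 0 (t·x is in the interior of K for every x ∈ K, t ∈ [0,1)). Then the Dirichlet problem for the uniform motion (ẍ = 0 in the interior of K, with elastic reflection at the boundary, x(0) = x(T) = 0) has a nontrivial solution: there exists z ≠ 0 with φ(z) = 0 such that the function x : [0,T] → ℝⁿ defined by x(t) = (2t/T)·z for t ∈ [0, T/2] and x(t) = (2(T−t)/T)·z for t ∈ [T/2, T] satisfies x(0) = x(T) = 0, x(t) lies in the interior of K for every t ≠ T/2, x(T/2) = z lies on the frontier of K, and the one-sided derivatives at T/2 obey the reflection law x'(T/2+) = x'(T/2−) − 2⟨x'(T/2−), ν⟩ν, where ν = ∇φ(z)/‖∇φ(z)‖ is the outer unit normal at z; moreover ‖x'(T/2+)‖ = ‖x'(T/2−)‖. -/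

import Mathlib

/-!
A point `z` of `K` of maximal norm is nonzero, since `0` is interior, and lies on the frontier,
since a slight dilation of an interior point would stay in `K`; hence `φ z = 0`. As `z` also
maximizes the norm on the level set `{φ = 0}`, Lagrange multipliers make `z` parallel to the
normal `∇φ(z)`. Strong star-shapedness keeps the open segment from `0` to `z` in the interior, and
the motion out and back along it reverses the velocity at `z`, which is the reflection law for an
impact along the normal.
-/

open Set
open scoped RealInnerProductSpace

section MaxNorm

variable {E : Type*} [NormedAddCommGroup E] [NormedSpace ℝ E] {K : Set E} {z : E}

theorem ne_zero_of_isMaxOn_norm [Nontrivial E] (hmax : IsMaxOn norm K z)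
    (h0 : (0 : E) ∈ interior K) : z ≠ 0 := by
  rintro rfl
  have hK : K ⊆ {0} := fun w hw => norm_le_zero_iff.1 (by simpa using hmax hw)
  simpa [interior_singleton] using interior_mono hK h0

theorem notMem_interior_of_isMaxOn_norm (hmax : IsMaxOn norm K z) (hz : z ≠ 0) :
    z ∉ interior K := by
  intro hzK
  have hray : Filter.Tendsto (fun t : ℝ => t • z) (nhds 1) (nhds z) := by
    simpa using (continuous_id.smul continuous_const).tendsto (1 : ℝ) (f := fun t : ℝ => t • z)
  obtain ⟨t, htK, ht⟩ := ((hray.eventually (isOpen_interior.mem_nhds hzK)).filter_mono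
    nhdsWithin_le_nhds |>.and (self_mem_nhdsWithin (s := Ioi (1 : ℝ)))).exists
  have := hmax (interior_subset htK)
  rw [mem_ofPred_eq, norm_smul, Real.norm_eq_abs, abs_of_pos (one_pos.trans ht)] at this
  nlinarith [norm_pos_iff.2 hz, show (1:ℝ) < t from ht]

theorem mem_frontier_of_isMaxOn_norm (hmax : IsMaxOn norm K z) (hzK : z ∈ K) (hz : z ≠ 0) :
    z ∈ frontier K :=
  ⟨subset_closure hzK, notMem_interior_of_isMaxOn_norm hmax hz⟩

end MaxNorm

theorem exists_eq_smul_gradient_of_isLocalMaxOn_norm {E : Type*} [NormedAddCommGroup E]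
    [InnerProductSpace ℝ E] [CompleteSpace E] {φ : E → ℝ} {z : E}
    (hφ : HasStrictFDerivAt φ (fderiv ℝ φ z) z) (hg : gradient φ z ≠ 0)
    (hmax : IsLocalMaxOn norm {x | φ x = φ z} z) : ∃ c : ℝ, z = c • gradient φ z := by
  have hmax_sq : IsLocalMaxOn (fun x => ‖x‖ ^ 2) {x | φ x = φ z} z :=
    Filter.Eventually.mono hmax fun x (hx : ‖x‖ ≤ ‖z‖) => pow_le_pow_left₀ (norm_nonneg x) hx 2
  obtain ⟨a, b, hab, hlin⟩ :=
    IsLocalExtrOn.exists_multipliers_of_hasStrictFDerivAt_1d (Or.inr hmax_sq) hφ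
      (hasStrictFDerivAt_norm_sq z)
  have hfd : fderiv ℝ φ z = InnerProductSpace.toDual ℝ E (gradient φ z) :=
    ((InnerProductSpace.toDual ℝ E).apply_symm_apply _).symm
  have hcomb : a • gradient φ z + (2 * b) • z = 0 := by
    refine ext_inner_right ℝ fun w => ?_
    have := DFunLike.congr_fun hlin w
    simp only [hfd, add_apply, smul_apply, zero_apply, InnerProductSpace.toDual_apply_apply,
      innerSL_apply_apply, smul_eq_mul, nsmul_eq_mul, Nat.cast_ofNat] at this
    simp only [inner_add_left, real_inner_smul_left, inner_zero_left]
    linarith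
  have hb : b ≠ 0 := by
    rintro rfl
    have ha : a ≠ 0 := fun ha => hab (by simp [ha])
    simp only [mul_zero, zero_smul, add_zero, smul_eq_zero] at hcomb
    exact hg (hcomb.resolve_left ha)
  have h2b : (2 * b) ≠ 0 := mul_ne_zero two_ne_zero hb
  refine ⟨-(a / (2 * b)), smul_right_injective E h2b ?_⟩
  change (2 * b) • z = (2 * b) • _
  rw [neg_smul, smul_neg, smul_smul, mul_div_cancel₀ _ h2b]
  exact eq_neg_of_add_eq_zero_right hcomb

section TentPath

variable {E : Type*} [NormedAddCommGroup E] [NormedSpace ℝ E] (T : ℝ) (z : E)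

noncomputable def tentPath (t : ℝ) : E :=
  if t ≤ T / 2 then (2 * t / T) • z else (2 * (T - t) / T) • z

variable {T}

theorem tentPath_zero (hT : 0 ≤ T) : tentPath T z 0 = 0 := by
  simp [tentPath, show (0 : ℝ) ≤ T / 2 by positivity]

theorem tentPath_self (hT : 0 < T) : tentPath T z T = 0 := by
  simp [tentPath, half_lt_self hT]

theorem tentPath_half (hT : T ≠ 0) : tentPath T z (T / 2) = z := by
  simp [tentPath, mul_div_cancel₀ _ (two_ne_zero (α := ℝ)), div_self hT]

theorem exists_mem_Ico_tentPath_eq_smul (hT : 0 < T) {t : ℝ} (ht : t ∈ Icc 0 T)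
    (hne : t ≠ T / 2) :
    ∃ s ∈ Ico (0 : ℝ) 1, tentPath T z t = s • z := by
  unfold tentPath
  split_ifs with h
  · refine ⟨2 * t / T, ⟨by have := ht.1; positivity, ?_⟩, rfl⟩
    rw [div_lt_one hT]
    linarith [lt_of_le_of_ne h hne]
  · refine ⟨2 * (T - t) / T, ⟨div_nonneg (by linarith [ht.2]) hT.le, ?_⟩, rfl⟩
    rw [div_lt_one hT]
    linarith

theorem hasDerivWithinAt_tentPath_Iic :
    HasDerivWithinAt (tentPath T z) ((2 / T) • z) (Iic (T / 2)) (T / 2) := by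
  have h : HasDerivAt (fun t : ℝ => (2 * t / T) • z) ((2 / T) • z) (T / 2) := by
    simpa using (((hasDerivAt_id (T / 2)).const_mul 2).div_const T).smul_const z
  exact h.hasDerivWithinAt.congr (fun t ht => if_pos ht) (if_pos le_rfl)

theorem hasDerivWithinAt_tentPath_Ici :
    HasDerivWithinAt (tentPath T z) (-(2 / T) • z) (Ici (T / 2)) (T / 2) := by
  have h : HasDerivAt (fun t : ℝ => (2 * (T - t) / T) • z) (-(2 / T) • z) (T / 2) := by
    simpa [neg_div] using
      ((((hasDerivAt_id (T / 2)).const_sub T).const_mul 2).div_const T).smul_const z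
  have heq : ∀ t ∈ Ici (T / 2), tentPath T z t = (2 * (T - t) / T) • z := by
    intro t ht
    rcases (mem_Ici.1 ht).eq_or_lt with rfl | hlt
    · simp only [tentPath, if_pos le_rfl]
      ring_nf
    · exact if_neg hlt.not_ge
  exact h.hasDerivWithinAt.congr heq (heq _ self_mem_Ici)

end TentPath

theorem sub_two_inner_normalize_smul_eq_neg_of_eq_smul {E : Type*} [NormedAddCommGroup E]
    [InnerProductSpace ℝ E] {v g : E} {c : ℝ} (hv : v = c • g) :
    v - (2 * ⟪v, ‖g‖⁻¹ • g⟫) • (‖g‖⁻¹ • g) = -v := by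
  subst hv
  rcases eq_or_ne g 0 with rfl | hg
  · simp
  have hg' : ‖g‖ ≠ 0 := norm_ne_zero_iff.2 hg
  rw [real_inner_smul_left, real_inner_smul_right, real_inner_self_eq_norm_sq, smul_smul]
  field_simp
  module

theorem uniform_motion_dirichlet_nontrivial_solution_general
    (n : ℕ) (hn : 3 ≤ n) (T : ℝ) (hT : 0 < T)
    (φ : EuclideanSpace ℝ (Fin n) → ℝ) (hφ : ContDiff ℝ 1 φ)
    (hcpt : IsCompact {x : EuclideanSpace ℝ (Fin n) | φ x ≤ 0})
    (hfr : frontier {x : EuclideanSpace ℝ (Fin n) | φ x ≤ 0}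
      = {x : EuclideanSpace ℝ (Fin n) | φ x = 0})
    (hgrad : ∀ y : EuclideanSpace ℝ (Fin n), φ y = 0 → gradient φ y ≠ 0)
    (h0 : (0 : EuclideanSpace ℝ (Fin n)) ∈ interior {x : EuclideanSpace ℝ (Fin n) | φ x ≤ 0})
    (hstar : ∀ x ∈ {x : EuclideanSpace ℝ (Fin n) | φ x ≤ 0}, ∀ t ∈ Set.Ico (0:ℝ) 1,
      t • x ∈ interior {x : EuclideanSpace ℝ (Fin n) | φ x ≤ 0}) :
    ∃ z : EuclideanSpace ℝ (Fin n), z ≠ 0 ∧ φ z = 0 ∧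
      ∀ x : ℝ → EuclideanSpace ℝ (Fin n),
        (∀ t : ℝ, x t = if t ≤ T / 2 then (2 * t / T) • z else (2 * (T - t) / T) • z) →
        x 0 = 0 ∧ x T = 0 ∧
        (∀ t ∈ Set.Icc 0 T, t ≠ T / 2 →
          x t ∈ interior {p : EuclideanSpace ℝ (Fin n) | φ p ≤ 0}) ∧
        x (T / 2) = z ∧
        z ∈ frontier {p : EuclideanSpace ℝ (Fin n) | φ p ≤ 0} ∧
        ∃ vminus vplus : EuclideanSpace ℝ (Fin n),
          HasDerivWithinAt x vminus (Set.Iic (T / 2)) (T / 2) ∧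
          HasDerivWithinAt x vplus (Set.Ici (T / 2)) (T / 2) ∧
          vplus = vminus
            - (2 * ⟪vminus, ‖gradient φ z‖⁻¹ • gradient φ z⟫)
              • (‖gradient φ z‖⁻¹ • gradient φ z) ∧
          ‖vplus‖ = ‖vminus‖ := by
  have : NeZero n := ⟨by omega⟩
  obtain ⟨z, hzK, hzmax⟩ :=
    hcpt.exists_isMaxOn ⟨0, interior_subset h0⟩ continuous_norm.continuousOn
  have hz0 : z ≠ 0 := ne_zero_of_isMaxOn_norm hzmax h0
  have hzfr := mem_frontier_of_isMaxOn_norm hzmax hzK hz0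
  have hφz : φ z = 0 := by rwa [hfr] at hzfr
  have hlevel : {x | φ x = φ z} ⊆ {x | φ x ≤ 0} := fun x (hx : φ x = φ z) => (hx.trans hφz).le
  obtain ⟨c, hzc⟩ := exists_eq_smul_gradient_of_isLocalMaxOn_norm
    (hφ.contDiffAt.hasStrictFDerivAt one_ne_zero) (hgrad z hφz) (hzmax.on_subset hlevel).localize
  refine ⟨z, hz0, hφz, fun x hx => ?_⟩
  obtain rfl : x = tentPath T z := funext hx
  refine ⟨tentPath_zero z hT.le, tentPath_self z hT, fun t ht hne => ?_, tentPath_half z hT.ne',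
    hzfr, _, _, hasDerivWithinAt_tentPath_Iic z, hasDerivWithinAt_tentPath_Ici z, ?_, ?_⟩
  · obtain ⟨s, hs, hxt⟩ := exists_mem_Ico_tentPath_eq_smul z hT ht hne
    exact hxt ▸ hstar z hzK s hs
  · have hv : (2 / T) • z = (2 / T * c) • gradient φ z := by rw [← smul_smul, ← hzc]
    rw [sub_two_inner_normalize_smul_eq_neg_of_eq_smul hv, neg_smul]
  · rw [neg_smul, norm_neg]

/-- in a compact, smooth, strongly star-shaped (w.r.t. `0`) billiard
table `K = {φ ≤ 0} ⊂ ℝⁿ` with `n ≥ 3` odd, the Dirichlet problem for the uniform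
motion (`ẍ = 0` with elastic reflection, `x(0) = x(T) = 0`) has a nontrivial
solution: a `there-and-back` trajectory along a ray hitting the boundary
orthogonally at a point `z`, at time `T/2`, where the elastic reflection law
holds with the outer unit normal `ν = ∇φ(z)/‖∇φ(z)‖`. -/
theorem uniform_motion_dirichlet_nontrivial_solution
    (n : ℕ) (hodd : Odd n) (hn : 3 ≤ n) (T : ℝ) (hT : 0 < T)
    (φ : EuclideanSpace ℝ (Fin n) → ℝ) (hφ : ContDiff ℝ 1 φ)
    (hcpt : IsCompact {x : EuclideanSpace ℝ (Fin n) | φ x ≤ 0})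
    (hfr : frontier {x : EuclideanSpace ℝ (Fin n) | φ x ≤ 0}
      = {x : EuclideanSpace ℝ (Fin n) | φ x = 0})
    (hgrad : ∀ y : EuclideanSpace ℝ (Fin n), φ y = 0 → gradient φ y ≠ 0)
    (h0 : (0 : EuclideanSpace ℝ (Fin n)) ∈ interior {x : EuclideanSpace ℝ (Fin n) | φ x ≤ 0})
    (hstar : ∀ x ∈ {x : EuclideanSpace ℝ (Fin n) | φ x ≤ 0}, ∀ t ∈ Set.Ico (0:ℝ) 1,
      t • x ∈ interior {x : EuclideanSpace ℝ (Fin n) | φ x ≤ 0}) :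
    ∃ z : EuclideanSpace ℝ (Fin n), z ≠ 0 ∧ φ z = 0 ∧
      ∀ x : ℝ → EuclideanSpace ℝ (Fin n),
        (∀ t : ℝ, x t = if t ≤ T / 2 then (2 * t / T) • z else (2 * (T - t) / T) • z) →
        x 0 = 0 ∧ x T = 0 ∧
        (∀ t ∈ Set.Icc 0 T, t ≠ T / 2 →
          x t ∈ interior {p : EuclideanSpace ℝ (Fin n) | φ p ≤ 0}) ∧
        x (T / 2) = z ∧
        z ∈ frontier {p : EuclideanSpace ℝ (Fin n) | φ p ≤ 0} ∧
        ∃ vminus vplus : EuclideanSpace ℝ (Fin n),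
          HasDerivWithinAt x vminus (Set.Iic (T / 2)) (T / 2) ∧
          HasDerivWithinAt x vplus (Set.Ici (T / 2)) (T / 2) ∧
          vplus = vminus
            - (2 * ⟪vminus, ‖gradient φ z‖⁻¹ • gradient φ z⟫)
              • (‖gradient φ z‖⁻¹ • gradient φ z) ∧
          ‖vplus‖ = ‖vminus‖ :=
  uniform_motion_dirichlet_nontrivial_solution_general n hn T hT φ hφ hcpt hfr hgrad h0 hstar
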